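/- For any even n ≥ 4, there exists a boolean function κ : 𝔹^n → 𝔹 and a point v such that, for the instance (v, κ(v)), there is an irrelevant feature i₁ with Sv(i₁) ≠ 0 and a distinct relevant feature i₂ with Sv(i₂) = 0. -/

import Mathlib

open Finset

/-- `X` is a weak abductive explanation (weak AXp) for classifier `κ` at point `v`:
every point agreeing with `v` on `X` gets the same prediction as `v`. -/
def weakAXp {n : ℕ} (κ : (Fin n → Bool) → Bool) (v : Fin n → Bool)
    (X : Finset (Fin n)) : Prop :=
  ∀ x : Fin n → Bool, (∀ i ∈ X, x i = v i) → κ x = κ v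

/-- `X` is an AXp: a subset-minimal weak AXp. -/
def AXp {n : ℕ} (κ : (Fin n → Bool) → Bool) (v : Fin n → Bool)
    (X : Finset (Fin n)) : Prop :=
  weakAXp κ v X ∧ ∀ X' ⊂ X, ¬ weakAXp κ v X'

/-- `Y` is a weak contrastive explanation (weak CXp) for `κ` at `v`:
some point agreeing with `v` outside `Y` gets a different prediction. -/
def weakCXp {n : ℕ} (κ : (Fin n → Bool) → Bool) (v : Fin n → Bool)
    (Y : Finset (Fin n)) : Prop :=
  ∃ x : Fin n → Bool, (∀ i ∉ Y, x i = v i) ∧ κ x ≠ κ v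

/-- `Y` is a CXp: a subset-minimal weak CXp. -/
def CXp {n : ℕ} (κ : (Fin n → Bool) → Bool) (v : Fin n → Bool)
    (Y : Finset (Fin n)) : Prop :=
  weakCXp κ v Y ∧ ∀ Y' ⊂ Y, ¬ weakCXp κ v Y'

/-- A feature is relevant if it occurs in some AXp. -/
def Relevant {n : ℕ} (κ : (Fin n → Bool) → Bool) (v : Fin n → Bool) (i : Fin n) : Prop :=
  ∃ X, AXp κ v X ∧ i ∈ X

/-- A feature is irrelevant if it occurs in no AXp. -/
def Irrelevant {n : ℕ} (κ : (Fin n → Bool) → Bool) (v : Fin n → Bool) (i : Fin n) : Prop :=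
  ¬ Relevant κ v i

/-- `phi κ v S` : average value of `κ` over points agreeing with `v` on `S`
(uniform distribution). -/
noncomputable def phi {n : ℕ} (κ : (Fin n → Bool) → Bool) (v : Fin n → Bool)
    (S : Finset (Fin n)) : ℝ :=
  (1 / 2 ^ (n - S.card)) *
    ∑ x ∈ Finset.univ.filter (fun x : Fin n → Bool => ∀ i ∈ S, x i = v i),
      (if κ x then (1 : ℝ) else 0)

/-- Shapley value of feature `i` for classifier `κ` at point `v`. -/
noncomputable def Sv {n : ℕ} (κ : (Fin n → Bool) → Bool) (v : Fin n → Bool)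
    (i : Fin n) : ℝ :=
  ∑ S ∈ (Finset.univ.erase i).powerset,
    ((S.card.factorial * (n - S.card - 1).factorial : ℝ) / n.factorial) *
      (phi κ v (insert i S) - phi κ v S)

namespace S7

variable {n : ℕ}
def a0 (hn : 4 ≤ n) : Fin n := ⟨0, by omega⟩
def a1 (hn : 4 ≤ n) : Fin n := ⟨1, by omega⟩
def a2 (hn : 4 ≤ n) : Fin n := ⟨2, by omega⟩
def a3 (hn : 4 ≤ n) : Fin n := ⟨3, by omega⟩
def T (hn : 4 ≤ n) : Finset (Fin n) := {a0 hn, a1 hn, a2 hn, a3 hn}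
def K (hn : 4 ≤ n) : (Fin n → Bool) → Bool := fun x =>
  (!(x (a0 hn)) && x (a1 hn) && x (a2 hn) && x (a3 hn)) ||
  (x (a0 hn) && !(x (a1 hn)) && !(x (a2 hn)) && x (a3 hn))
def vv (n : ℕ) : Fin n → Bool := fun _ => true
variable (hn : 4 ≤ n)
lemma ne01 : a0 hn ≠ a1 hn := by simp [a0, a1, Fin.ext_iff]
lemma ne02 : a0 hn ≠ a2 hn := by simp [a0, a2, Fin.ext_iff]
lemma ne03 : a0 hn ≠ a3 hn := by simp [a0, a3, Fin.ext_iff]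
lemma ne12 : a1 hn ≠ a2 hn := by simp [a1, a2, Fin.ext_iff]
lemma ne13 : a1 hn ≠ a3 hn := by simp [a1, a3, Fin.ext_iff]
lemma ne23 : a2 hn ≠ a3 hn := by simp [a2, a3, Fin.ext_iff]
lemma K_v : K hn (vv n) = false := by simp [K, vv]
lemma K_true_iff (x : Fin n → Bool) : K hn x = true ↔
    (x (a0 hn) = false ∧ x (a1 hn) = true ∧ x (a2 hn) = true ∧ x (a3 hn) = true) ∨
    (x (a0 hn) = true ∧ x (a1 hn) = false ∧ x (a2 hn) = false ∧ x (a3 hn) = true) := by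
  simp only [K, Bool.or_eq_true, Bool.and_eq_true, Bool.not_eq_true']
  tauto
lemma card_T : (T hn).card = 4 := by
  rw [T]
  rw [card_insert_of_notMem (by simp [ne01 hn, ne02 hn, ne03 hn]),
      card_insert_of_notMem (by simp [ne12 hn, ne13 hn]),
      card_insert_of_notMem (by simp [ne23 hn]), card_singleton]

lemma card_agree (U : Finset (Fin n)) (w : Fin n → Bool) :
    (Finset.univ.filter fun x : Fin n → Bool => ∀ i ∈ U, x i = w i).card = 2 ^ (n - U.card) := by
  rw [← Fintype.card_subtype]
  have e : {x : Fin n → Bool // ∀ i ∈ U, x i = w i} ≃ ((Uᶜ : Finset (Fin n)) → Bool) :=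
    { toFun := fun x j => x.1 j.1
      invFun := fun y =>
        ⟨fun i => if h : i ∈ U then w i else y ⟨i, Finset.mem_compl.2 h⟩,
          fun i hi => by simp [hi]⟩
      left_inv := fun x => by
        ext i
        by_cases h : i ∈ U
        · simp [h, x.2 i h]
        · simp [h]
      right_inv := fun y => by
        ext j
        have : j.1 ∉ U := Finset.mem_compl.1 j.2
        simp [this] }
  rw [Fintype.card_congr e]
  simp [Finset.card_compl]

lemma phi_K (S : Finset (Fin n)) :
    phi (K hn) (vv n) S =
      ((if a0 hn ∉ S then (1:ℝ) else 0) + (if a1 hn ∉ S ∧ a2 hn ∉ S then 1 else 0)) /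
        2 ^ (4 - (S ∩ T hn).card) := by
  have hQ1 : ∀ x : Fin n → Bool, (∀ i ∈ S, x i = vv n i) →
      ((x (a0 hn) = false ∧ x (a1 hn) = true ∧ x (a2 hn) = true ∧ x (a3 hn) = true) →
        a0 hn ∉ S) := by
    intro x hP hq hmem
    have := hP _ hmem
    rw [hq.1] at this
    simp [vv] at this
  -- rewrite the sum as a card
  rw [phi, Finset.sum_boole, Finset.filter_filter]
  -- split the count
  have hsplit : (univ.filter fun x : Fin n → Bool =>
        (∀ i ∈ S, x i = vv n i) ∧ K hn x = true)
      = (univ.filter fun x : Fin n → Bool => (∀ i ∈ S, x i = vv n i) ∧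
          (x (a0 hn) = false ∧ x (a1 hn) = true ∧ x (a2 hn) = true ∧ x (a3 hn) = true))
        ∪ (univ.filter fun x : Fin n → Bool => (∀ i ∈ S, x i = vv n i) ∧
          (x (a0 hn) = true ∧ x (a1 hn) = false ∧ x (a2 hn) = false ∧ x (a3 hn) = true)) := by
    rw [← Finset.filter_or]
    apply Finset.filter_congr
    intro x _
    rw [K_true_iff hn x]
    tauto
  have hdisj : Disjoint
      (univ.filter fun x : Fin n → Bool => (∀ i ∈ S, x i = vv n i) ∧
        (x (a0 hn) = false ∧ x (a1 hn) = true ∧ x (a2 hn) = true ∧ x (a3 hn) = true))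
      (univ.filter fun x : Fin n → Bool => (∀ i ∈ S, x i = vv n i) ∧
        (x (a0 hn) = true ∧ x (a1 hn) = false ∧ x (a2 hn) = false ∧ x (a3 hn) = true)) := by
    rw [Finset.disjoint_left]
    intro x hx1 hx2
    simp only [mem_filter] at hx1 hx2
    rw [hx1.2.2.1] at hx2
    exact absurd hx2.2.2.1 (by simp)
  rw [hsplit, Finset.card_union_of_disjoint hdisj]
  -- first count
  have c1 : (univ.filter fun x : Fin n → Bool => (∀ i ∈ S, x i = vv n i) ∧
        (x (a0 hn) = false ∧ x (a1 hn) = true ∧ x (a2 hn) = true ∧ x (a3 hn) = true)).card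
      = if a0 hn ∉ S then 2 ^ (n - (S ∪ T hn).card) else 0 := by
    by_cases h : a0 hn ∈ S
    · rw [if_neg (by simpa using h), Finset.card_eq_zero, Finset.filter_eq_empty_iff]
      intro x _
      rintro ⟨hP, hq, -⟩
      have := hP _ h
      rw [hq] at this
      simp [vv] at this
    · rw [if_pos h]
      have heq : (univ.filter fun x : Fin n → Bool => (∀ i ∈ S, x i = vv n i) ∧
            (x (a0 hn) = false ∧ x (a1 hn) = true ∧ x (a2 hn) = true ∧ x (a3 hn) = true))
          = univ.filter fun x : Fin n → Bool => ∀ i ∈ S ∪ T hn,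
              x i = if i = a0 hn then false else true := by
        apply Finset.filter_congr
        intro x _
        constructor
        · rintro ⟨hP, h0, h1, h2, h3⟩ i hi
          rcases Finset.mem_union.1 hi with hiS | hiT
          · have hne : i ≠ a0 hn := fun e => h (e ▸ hiS)
            rw [if_neg hne]
            simpa [vv] using hP i hiS
          · simp only [T, mem_insert, mem_singleton] at hiT
            rcases hiT with rfl | rfl | rfl | rfl
            · rw [if_pos rfl]; exact h0
            · rw [if_neg (Ne.symm (ne01 hn))]; exact h1
            · rw [if_neg (Ne.symm (ne02 hn))]; exact h2
            · rw [if_neg (Ne.symm (ne03 hn))]; exact h3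
        · intro hall
          refine ⟨fun i hi => ?_, ?_, ?_, ?_, ?_⟩
          · have hne : i ≠ a0 hn := fun e => h (e ▸ hi)
            rw [hall i (Finset.mem_union_left _ hi), if_neg hne]; rfl
          · rw [hall (a0 hn) (Finset.mem_union_right _ (by simp [T])), if_pos rfl]
          · rw [hall (a1 hn) (Finset.mem_union_right _ (by simp [T])),
              if_neg (Ne.symm (ne01 hn))]
          · rw [hall (a2 hn) (Finset.mem_union_right _ (by simp [T])),
              if_neg (Ne.symm (ne02 hn))]
          · rw [hall (a3 hn) (Finset.mem_union_right _ (by simp [T])),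
              if_neg (Ne.symm (ne03 hn))]
      rw [heq, card_agree]
  -- second count
  have c2 : (univ.filter fun x : Fin n → Bool => (∀ i ∈ S, x i = vv n i) ∧
        (x (a0 hn) = true ∧ x (a1 hn) = false ∧ x (a2 hn) = false ∧ x (a3 hn) = true)).card
      = if a1 hn ∉ S ∧ a2 hn ∉ S then 2 ^ (n - (S ∪ T hn).card) else 0 := by
    by_cases h : a1 hn ∉ S ∧ a2 hn ∉ S
    · rw [if_pos h]
      have heq : (univ.filter fun x : Fin n → Bool => (∀ i ∈ S, x i = vv n i) ∧
            (x (a0 hn) = true ∧ x (a1 hn) = false ∧ x (a2 hn) = false ∧ x (a3 hn) = true))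
          = univ.filter fun x : Fin n → Bool => ∀ i ∈ S ∪ T hn,
              x i = if i = a1 hn ∨ i = a2 hn then false else true := by
        apply Finset.filter_congr
        intro x _
        constructor
        · rintro ⟨hP, h0, h1, h2, h3⟩ i hi
          rcases Finset.mem_union.1 hi with hiS | hiT
          · have hne : ¬(i = a1 hn ∨ i = a2 hn) := by
              rintro (rfl | rfl)
              · exact h.1 hiS
              · exact h.2 hiS
            rw [if_neg hne]
            simpa [vv] using hP i hiS
          · simp only [T, mem_insert, mem_singleton] at hiT
            rcases hiT with rfl | rfl | rfl | rfl
            · rw [if_neg (by push_neg; exact ⟨ne01 hn, ne02 hn⟩)]; exact h0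
            · rw [if_pos (Or.inl rfl)]; exact h1
            · rw [if_pos (Or.inr rfl)]; exact h2
            · rw [if_neg (by push_neg; exact ⟨Ne.symm (ne13 hn), Ne.symm (ne23 hn)⟩)]; exact h3
        · intro hall
          refine ⟨fun i hi => ?_, ?_, ?_, ?_, ?_⟩
          · have hne : ¬(i = a1 hn ∨ i = a2 hn) := by
              rintro (rfl | rfl)
              · exact h.1 hi
              · exact h.2 hi
            rw [hall i (Finset.mem_union_left _ hi), if_neg hne]; rfl
          · rw [hall (a0 hn) (Finset.mem_union_right _ (by simp [T])),
              if_neg (by push_neg; exact ⟨ne01 hn, ne02 hn⟩)]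
          · rw [hall (a1 hn) (Finset.mem_union_right _ (by simp [T])), if_pos (Or.inl rfl)]
          · rw [hall (a2 hn) (Finset.mem_union_right _ (by simp [T])), if_pos (Or.inr rfl)]
          · rw [hall (a3 hn) (Finset.mem_union_right _ (by simp [T])),
              if_neg (by push_neg; exact ⟨Ne.symm (ne13 hn), Ne.symm (ne23 hn)⟩)]
      rw [heq, card_agree]
    · rw [if_neg h, Finset.card_eq_zero, Finset.filter_eq_empty_iff]
      intro x _
      rintro ⟨hP, -, h1, h2, -⟩
      rcases not_and_or.1 h with h' | h'
      · have := hP _ (not_not.1 h')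
        rw [h1] at this
        simp [vv] at this
      · have := hP _ (not_not.1 h')
        rw [h2] at this
        simp [vv] at this
  rw [c1, c2]
  -- arithmetic
  have hu : (S ∪ T hn).card + (S ∩ T hn).card = S.card + 4 := by
    rw [Finset.card_union_add_card_inter, card_T]
  have hun : (S ∪ T hn).card ≤ n := by
    simpa using Finset.card_le_card (Finset.subset_univ (S ∪ T hn))
  have ha : (S ∩ T hn).card ≤ 4 := by
    have := Finset.card_le_card (Finset.inter_subset_right (s₁ := S) (s₂ := T hn))
    rw [card_T hn] at this; exact this
  have hpow : (2:ℝ) ^ (n - (S ∪ T hn).card) * 2 ^ (4 - (S ∩ T hn).card)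
      = 2 ^ (n - S.card) := by
    have he : (n - (S ∪ T hn).card) + (4 - (S ∩ T hn).card) = n - S.card := by
      clear * - hu hun ha
      omega
    rw [← pow_add, he]
  push_cast
  rw [← hpow]
  have h1 : (0:ℝ) < 2 ^ (n - (S ∪ T hn).card) := by positivity
  have h2 : (0:ℝ) < 2 ^ (4 - (S ∩ T hn).card) := by positivity
  field_simp
  split_ifs <;> ring


lemma mem_image_swap {α : Type*} [DecidableEq α] (a b x : α) (S : Finset α) :
    x ∈ S.image (Equiv.swap a b) ↔ Equiv.swap a b x ∈ S := by
  constructor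
  · intro h
    rcases Finset.mem_image.1 h with ⟨y, hy, rfl⟩
    rwa [Equiv.swap_apply_self]
  · intro h
    exact Finset.mem_image.2 ⟨_, h, Equiv.swap_apply_self _ _ _⟩

lemma a0_mem_T : a0 hn ∈ T hn := by simp [T]
lemma a1_mem_T : a1 hn ∈ T hn := by simp [T]
lemma a3_mem_T : a3 hn ∈ T hn := by simp [T]

lemma image_swap_T : (T hn).image (Equiv.swap (a0 hn) (a2 hn)) = T hn := by
  ext x
  rw [mem_image_swap]
  by_cases h0 : x = a0 hn
  · subst h0
    rw [Equiv.swap_apply_left]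
    simp [T]
  by_cases h2 : x = a2 hn
  · subst h2
    rw [Equiv.swap_apply_right]
    simp [T]
  · rw [Equiv.swap_apply_of_ne_of_ne h0 h2]

/-- marginal contribution of feature `a1` -/
lemma delta_a1 (S : Finset (Fin n)) (hS : S ⊆ Finset.univ.erase (a1 hn)) :
    phi (K hn) (vv n) (insert (a1 hn) S) - phi (K hn) (vv n) S
      = ((if a0 hn ∉ S then (1:ℝ) else 0) - (if a2 hn ∉ S then 1 else 0)) /
          2 ^ (4 - (S ∩ T hn).card) := by
  have ha1S : a1 hn ∉ S := fun h => by simpa using (hS h)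
  have hsub : S ∩ T hn ⊆ (T hn).erase (a1 hn) := by
    intro x hx
    rw [Finset.mem_inter] at hx
    exact Finset.mem_erase.2 ⟨fun e => ha1S (e ▸ hx.1), hx.2⟩
  have ha : (S ∩ T hn).card ≤ 3 := by
    have := Finset.card_le_card hsub
    rwa [Finset.card_erase_of_mem (a1_mem_T hn), card_T hn] at this
  rw [phi_K hn, phi_K hn]
  have hc0 : (a0 hn ∉ insert (a1 hn) S) = (a0 hn ∉ S) := by
    simp [Finset.mem_insert, ne01 hn]
  have hc1 : (a1 hn ∉ insert (a1 hn) S ∧ a2 hn ∉ insert (a1 hn) S) = False := by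
    simp
  have hc2 : (a1 hn ∉ S ∧ a2 hn ∉ S) = (a2 hn ∉ S) := by
    simp [ha1S]
  have hcard : (insert (a1 hn) S ∩ T hn).card = (S ∩ T hn).card + 1 := by
    rw [Finset.insert_inter_of_mem (a1_mem_T hn),
      Finset.card_insert_of_notMem (fun h => ha1S (Finset.mem_inter.1 h).1)]
  simp only [hc0, hc1, hc2, hcard, if_false]
  have h34 : 4 - (S ∩ T hn).card = (4 - ((S ∩ T hn).card + 1)) + 1 := by omega
  rw [h34, pow_succ]
  have hp : (0:ℝ) < 2 ^ (4 - ((S ∩ T hn).card + 1)) := by positivity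
  split_ifs <;> (field_simp; try ring)

/-- marginal contribution of feature `a3` -/
lemma delta_a3 (S : Finset (Fin n)) (hS : S ⊆ Finset.univ.erase (a3 hn)) :
    phi (K hn) (vv n) (insert (a3 hn) S) - phi (K hn) (vv n) S
      = ((if a0 hn ∉ S then (1:ℝ) else 0) + (if a1 hn ∉ S ∧ a2 hn ∉ S then 1 else 0)) /
          2 ^ (4 - (S ∩ T hn).card) := by
  have ha3S : a3 hn ∉ S := fun h => by simpa using (hS h)
  have hsub : S ∩ T hn ⊆ (T hn).erase (a3 hn) := by
    intro x hx
    rw [Finset.mem_inter] at hx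
    exact Finset.mem_erase.2 ⟨fun e => ha3S (e ▸ hx.1), hx.2⟩
  have ha : (S ∩ T hn).card ≤ 3 := by
    have := Finset.card_le_card hsub
    rwa [Finset.card_erase_of_mem (a3_mem_T hn), card_T hn] at this
  rw [phi_K hn, phi_K hn]
  have hc0 : (a0 hn ∉ insert (a3 hn) S) = (a0 hn ∉ S) := by
    simp [Finset.mem_insert, ne03 hn]
  have hc1 : (a1 hn ∉ insert (a3 hn) S ∧ a2 hn ∉ insert (a3 hn) S)
      = (a1 hn ∉ S ∧ a2 hn ∉ S) := by
    simp [Finset.mem_insert, ne13 hn, ne23 hn]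
  have hcard : (insert (a3 hn) S ∩ T hn).card = (S ∩ T hn).card + 1 := by
    rw [Finset.insert_inter_of_mem (a3_mem_T hn),
      Finset.card_insert_of_notMem (fun h => ha3S (Finset.mem_inter.1 h).1)]
  simp only [hc0, hc1, hcard]
  have h34 : 4 - (S ∩ T hn).card = (4 - ((S ∩ T hn).card + 1)) + 1 := by omega
  rw [h34, pow_succ]
  have hp : (0:ℝ) < 2 ^ (4 - ((S ∩ T hn).card + 1)) := by positivity
  split_ifs <;> (field_simp; try ring)

lemma Sv_a1_zero : Sv (K hn) (vv n) (a1 hn) = 0 := by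
  rw [Sv]
  have pair : ∀ S ∈ (Finset.univ.erase (a1 hn)).powerset,
      (fun S : Finset (Fin n) =>
        ((S.card.factorial * (n - S.card - 1).factorial : ℝ) / n.factorial) *
          (phi (K hn) (vv n) (insert (a1 hn) S) - phi (K hn) (vv n) S)) S +
      (fun S : Finset (Fin n) =>
        ((S.card.factorial * (n - S.card - 1).factorial : ℝ) / n.factorial) *
          (phi (K hn) (vv n) (insert (a1 hn) S) - phi (K hn) (vv n) S))
        (S.image (Equiv.swap (a0 hn) (a2 hn))) = 0 := by
    intro S hSmem
    have hS : S ⊆ Finset.univ.erase (a1 hn) := Finset.mem_powerset.1 hSmem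
    set σS := S.image (Equiv.swap (a0 hn) (a2 hn)) with hσ
    have hσsub : σS ⊆ Finset.univ.erase (a1 hn) := by
      intro x hx
      rw [hσ, mem_image_swap] at hx
      have h' := hS hx
      rw [Finset.mem_erase] at h' ⊢
      refine ⟨fun e => ?_, Finset.mem_univ x⟩
      subst e
      rw [Equiv.swap_apply_of_ne_of_ne (Ne.symm (ne01 hn)) (ne12 hn)] at h'
      exact h'.1 rfl
    have hcardσ : σS.card = S.card := Finset.card_image_of_injective _ (Equiv.injective _)
    have hinterσ : (σS ∩ T hn).card = (S ∩ T hn).card := by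
      have himg : σS ∩ T hn = (S ∩ T hn).image (Equiv.swap (a0 hn) (a2 hn)) := by
        conv_lhs => rw [← image_swap_T hn]
        exact (Finset.image_inter S (T hn) (Equiv.injective _)).symm
      rw [himg]
      exact Finset.card_image_of_injective _ (Equiv.injective _)
    have h0σ : (a0 hn ∉ σS) = (a2 hn ∉ S) := by
      rw [hσ, mem_image_swap, Equiv.swap_apply_left]
    have h2σ : (a2 hn ∉ σS) = (a0 hn ∉ S) := by
      rw [hσ, mem_image_swap, Equiv.swap_apply_right]
    simp only
    rw [delta_a1 hn S hS, delta_a1 hn σS hσsub, hcardσ, hinterσ]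
    simp only [h0σ, h2σ]
    ring
  refine Finset.sum_involution (fun S _ => S.image (Equiv.swap (a0 hn) (a2 hn))) pair
    (fun S hSmem hne heq => ?_) (fun S hSmem => ?_) (fun S hSmem => ?_)
  · have hp := pair S hSmem
    simp only at hp heq
    rw [heq] at hp
    exact hne (by linarith)
  · rw [Finset.mem_powerset]
    intro x hx
    rw [mem_image_swap] at hx
    have h' := Finset.mem_powerset.1 hSmem hx
    rw [Finset.mem_erase] at h' ⊢
    refine ⟨fun e => ?_, Finset.mem_univ x⟩
    subst e
    rw [Equiv.swap_apply_of_ne_of_ne (Ne.symm (ne01 hn)) (ne12 hn)] at h'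
    exact h'.1 rfl
  · ext x
    rw [mem_image_swap, mem_image_swap, Equiv.swap_apply_self]

lemma Sv_a3_pos : 0 < Sv (K hn) (vv n) (a3 hn) := by
  rw [Sv]
  apply Finset.sum_pos'
  · intro S hSmem
    have hS : S ⊆ Finset.univ.erase (a3 hn) := Finset.mem_powerset.1 hSmem
    rw [delta_a3 hn S hS]
    apply mul_nonneg
    · positivity
    · apply div_nonneg _ (by positivity)
      have h1 : (0:ℝ) ≤ if a0 hn ∉ S then (1:ℝ) else 0 := by split_ifs <;> norm_num
      have h2 : (0:ℝ) ≤ if a1 hn ∉ S ∧ a2 hn ∉ S then (1:ℝ) else 0 := by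
        split_ifs <;> norm_num
      linarith
  · refine ⟨∅, Finset.empty_mem_powerset _, ?_⟩
    rw [delta_a3 hn ∅ (Finset.empty_subset _)]
    refine mul_pos ?_ ?_
    · apply div_pos
      · exact_mod_cast mul_pos (Nat.factorial_pos _) (Nat.factorial_pos _)
      · exact_mod_cast Nat.factorial_pos n
    · rw [if_pos (Finset.notMem_empty _),
        if_pos ⟨Finset.notMem_empty _, Finset.notMem_empty _⟩]
      positivity



lemma irrelevant_a3 : Irrelevant (K hn) (vv n) (a3 hn) := by
  rintro ⟨X, ⟨hweak, hmin⟩, hmem⟩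
  refine hmin (X.erase (a3 hn)) (Finset.erase_ssubset hmem) ?_
  intro x hx
  by_cases h3 : x (a3 hn) = true
  · apply hweak
    intro i hi
    by_cases hia : i = a3 hn
    · subst hia
      simpa [vv] using h3
    · exact hx i (Finset.mem_erase.2 ⟨hia, hi⟩)
  · rw [K_v]
    have h3' : x (a3 hn) = false := by simpa using h3
    simp [K, h3']

lemma relevant_a1 : Relevant (K hn) (vv n) (a1 hn) := by
  refine ⟨{a0 hn, a1 hn}, ⟨?_, ?_⟩, by simp⟩
  · intro x hx
    have h0 : x (a0 hn) = true := by simpa [vv] using hx _ (by simp)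
    have h1 : x (a1 hn) = true := by simpa [vv] using hx _ (by simp)
    rw [K_v]
    simp [K, h0, h1]
  · intro X' hss hweak
    rw [Finset.ssubset_def] at hss
    obtain ⟨hsub, hnsub⟩ := hss
    have hne : ¬ (a0 hn ∈ X' ∧ a1 hn ∈ X') := by
      rintro ⟨hA, hB⟩
      refine hnsub ?_
      intro y hy
      simp only [Finset.mem_insert, Finset.mem_singleton] at hy
      rcases hy with rfl | rfl <;> assumption
    by_cases h0 : a0 hn ∈ X'
    · have h1 : a1 hn ∉ X' := fun hb => hne ⟨h0, hb⟩
      set x : Fin n → Bool := fun i => if i = a1 hn ∨ i = a2 hn then false else true with hxdef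
      have hagree : ∀ i ∈ X', x i = vv n i := by
        intro i hi
        have hmem := hsub hi
        simp only [Finset.mem_insert, Finset.mem_singleton] at hmem
        rcases hmem with rfl | rfl
        · rw [hxdef]
          simp only [vv]
          rw [if_neg (by push_neg; exact ⟨ne01 hn, ne02 hn⟩)]
        · exact absurd hi h1
      have hKv := hweak x hagree
      rw [K_v] at hKv
      have hKx : K hn x = true := by
        rw [K_true_iff]
        right
        refine ⟨?_, ?_, ?_, ?_⟩
        · rw [hxdef]; simp only
          rw [if_neg (by push_neg; exact ⟨ne01 hn, ne02 hn⟩)]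
        · rw [hxdef]; simp
        · rw [hxdef]; simp
        · rw [hxdef]; simp only
          rw [if_neg (by push_neg; exact ⟨Ne.symm (ne13 hn), Ne.symm (ne23 hn)⟩)]
      rw [hKx] at hKv
      exact absurd hKv (by simp)
    · set x : Fin n → Bool := fun i => if i = a0 hn then false else true with hxdef
      have hagree : ∀ i ∈ X', x i = vv n i := by
        intro i hi
        have hne0 : i ≠ a0 hn := fun e => h0 (e ▸ hi)
        rw [hxdef]
        simp only [vv]
        rw [if_neg hne0]
      have hKv := hweak x hagree
      rw [K_v] at hKv
      have hKx : K hn x = true := by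
        rw [K_true_iff]
        left
        refine ⟨?_, ?_, ?_, ?_⟩
        · rw [hxdef]; simp
        · rw [hxdef]; simp only; rw [if_neg (Ne.symm (ne01 hn))]
        · rw [hxdef]; simp only; rw [if_neg (Ne.symm (ne02 hn))]
        · rw [hxdef]; simp only; rw [if_neg (Ne.symm (ne03 hn))]
      rw [hKx] at hKv
      exact absurd hKv (by simp)

end S7

/-- Issue I4: for any even `n ≥ 4` there is a boolean function and a point with an
irrelevant feature of nonzero Shapley value and a distinct relevant feature of zero
Shapley value. -/
theorem stmt7 (n : ℕ) (hn : 4 ≤ n) (heven : Even n) :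
    ∃ (κ : (Fin n → Bool) → Bool) (v : Fin n → Bool) (i₁ i₂ : Fin n),
      i₁ ≠ i₂ ∧ Irrelevant κ v i₁ ∧ Sv κ v i₁ ≠ 0 ∧
        Relevant κ v i₂ ∧ Sv κ v i₂ = 0 :=
  ⟨S7.K hn, S7.vv n, S7.a3 hn, S7.a1 hn, Ne.symm (S7.ne13 hn),
    S7.irrelevant_a3 hn, (S7.Sv_a3_pos hn).ne',
    S7.relevant_a1 hn, S7.Sv_a1_zero hn⟩
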